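/- Let n ≥ 2 be an integer and ℓ a natural number, and define u : ℝ → ℝ by u(r) = (ℓ+2)·r^(ℓ : ℝ) − ℓ·r^(ℓ+2 : ℝ). Then: (i) for all r > 0, (L_{n,ℓ} u)(r) = −2ℓ(2ℓ+n)·r^(ℓ : ℝ), and hence (L_{n,ℓ}(fun s => (L_{n,ℓ} u)(s)))(r) = 0 for all r > 0; (ii) deriv u 1 = 0; (iii) u 1 = 2 and −deriv (fun s => (L_{n,ℓ} u)(s)) 1 = ℓ²·(2ℓ+n)·u 1. In other words, u is the radial profile of an eigenfunction of the biharmonic Steklov problem Δ²u = 0 in the unit ball, ∂_ν u = 0 and −∂_ν(Δu) = λ⁴ u on the unit sphere, with eigenvalue λ⁴ = ℓ²(2ℓ+n). -/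
import Mathlib


open Real

/-- The projected radial Laplacian `L_{n,ℓ}` acting on the ℓ-th spherical harmonic mode:
`(L_{n,ℓ} f)(r) = f''(r) + ((n-1)/r) f'(r) - (ℓ(ℓ+n-2)/r²) f(r)`. -/
noncomputable def radialLap (n ℓ : ℕ) (f : ℝ → ℝ) (r : ℝ) : ℝ :=
  deriv (deriv f) r + ((n : ℝ) - 1) / r * deriv f r -
    (ℓ : ℝ) * ((ℓ : ℝ) + n - 2) / r ^ 2 * f r

open Filter

private lemma rpow_hasDeriv (c p : ℝ) {r : ℝ} (hr : 0 < r) :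
    HasDerivAt (fun x : ℝ => c * x ^ p) (c * p * r ^ (p - 1)) r := by
  simpa [mul_assoc] using (Real.hasDerivAt_rpow_const (p := p) (Or.inl hr.ne')).const_mul c

private lemma deriv_congr_pos {f g : ℝ → ℝ} (h : ∀ s, 0 < s → f s = g s) {r : ℝ} (hr : 0 < r) :
    deriv f r = deriv g r :=
  Filter.EventuallyEq.deriv_eq (by filter_upwards [Ioi_mem_nhds hr] with s hs using h s hs)

private lemma deriv_pair (a p b q : ℝ) {r : ℝ} (hr : 0 < r) :
    deriv (fun x : ℝ => a * x ^ p - b * x ^ q) r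
      = a * p * r ^ (p - 1) - b * q * r ^ (q - 1) :=
  ((rpow_hasDeriv a p hr).sub (rpow_hasDeriv b q hr)).deriv

/-- The radial profile `u(r) = (ℓ+2) r^ℓ - ℓ r^{ℓ+2}` is a biharmonic Steklov eigenfunction
profile on the unit ball with eigenvalue `λ⁴ = ℓ²(2ℓ+n)`. -/
theorem steklov_eigenfunction_ball (n : ℕ) (hn : 2 ≤ n) (ℓ : ℕ) (u : ℝ → ℝ)
    (hu : ∀ r : ℝ, u r = ((ℓ : ℝ) + 2) * r ^ (ℓ : ℝ) - (ℓ : ℝ) * r ^ ((ℓ : ℝ) + 2)) :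
    (∀ r : ℝ, 0 < r →
        radialLap n ℓ u r = -(2 * (ℓ : ℝ) * (2 * ℓ + n)) * r ^ (ℓ : ℝ) ∧
        radialLap n ℓ (fun s : ℝ => radialLap n ℓ u s) r = 0) ∧
      deriv u 1 = 0 ∧
      u 1 = 2 ∧
      -deriv (fun s : ℝ => radialLap n ℓ u s) 1 = (ℓ : ℝ) ^ 2 * (2 * ℓ + n) * u 1 := by
  set k : ℝ := (ℓ : ℝ) with hk
  have hu' : u = fun x : ℝ => (k + 2) * x ^ k - k * x ^ (k + 2) := funext hu
  -- first derivative
  have hd1 : ∀ s : ℝ, 0 < s →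
      deriv u s = (k + 2) * k * s ^ (k - 1) - k * (k + 2) * s ^ (k + 1) := by
    intro s hs
    rw [hu', deriv_pair _ _ _ _ hs, show k + 2 - 1 = k + 1 by ring]
  -- second derivative
  have hd2 : ∀ s : ℝ, 0 < s →
      deriv (deriv u) s
        = (k + 2) * k * (k - 1) * s ^ (k - 2) - k * (k + 2) * (k + 1) * s ^ k := by
    intro s hs
    rw [deriv_congr_pos hd1 hs, deriv_pair _ _ _ _ hs,
      show k - 1 - 1 = k - 2 by ring, show k + 1 - 1 = k by ring]
  -- the Laplacian of u
  have hL : ∀ s : ℝ, 0 < s →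
      radialLap n ℓ u s = -(2 * k * (2 * k + n)) * s ^ k := by
    intro s hs
    have e1 : s ^ (k - 1) = s ^ k / s := by rw [rpow_sub hs, rpow_one]
    have e2 : s ^ (k + 1) = s ^ k * s := by rw [rpow_add hs, rpow_one]
    have e3 : s ^ (k - 2) = s ^ k / (s * s) := by
      rw [show k - 2 = k - 1 - 1 by ring, rpow_sub hs, rpow_sub hs, rpow_one, div_div]
    have e4 : s ^ (k + 2) = s ^ k * (s * s) := by
      rw [show k + 2 = k + 1 + 1 by ring, rpow_add hs, rpow_add hs, rpow_one, mul_assoc]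
    rw [radialLap, hd2 s hs, hd1 s hs, hu s, ← hk, e1, e2, e3, e4]
    field_simp
    ring
  have c : ℝ := 0
  -- derivative of the Laplacian of u
  have hc : ∀ s : ℝ, 0 < s →
      deriv (fun s : ℝ => radialLap n ℓ u s) s
        = -(2 * k * (2 * k + n)) * k * s ^ (k - 1) := by
    intro s hs
    rw [deriv_congr_pos hL hs, (rpow_hasDeriv _ k hs).deriv]
  have hc2 : ∀ s : ℝ, 0 < s →
      deriv (deriv (fun s : ℝ => radialLap n ℓ u s)) s
        = -(2 * k * (2 * k + n)) * k * (k - 1) * s ^ (k - 2) := by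
    intro s hs
    have := deriv_congr_pos (f := deriv (fun s : ℝ => radialLap n ℓ u s))
      (g := fun x : ℝ => (-(2 * k * (2 * k + n)) * k) * x ^ (k - 1)) (fun s hs => hc s hs) hs
    rw [this, (rpow_hasDeriv _ (k - 1) hs).deriv, show k - 1 - 1 = k - 2 by ring]
  refine ⟨fun r hr => ⟨hL r hr, ?_⟩, ?_, ?_, ?_⟩
  · have e1 : r ^ (k - 1) = r ^ k / r := by rw [rpow_sub hr, rpow_one]
    have e3 : r ^ (k - 2) = r ^ k / (r * r) := by
      rw [show k - 2 = k - 1 - 1 by ring, rpow_sub hr, rpow_sub hr, rpow_one, div_div]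
    rw [radialLap, hc2 r hr, hc r hr, hL r hr, ← hk, e1, e3]
    field_simp
    ring
  · rw [hd1 1 one_pos]; simp; ring
  · rw [hu 1]; simp
  · rw [hc 1 one_pos, hu 1]
    simp only [one_rpow, mul_one]
    ring
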